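/- arXiv:2506.23685 — 2 statements merged into one kernel-verified Lean document; each statement's English description precedes it below -/
import Mathlib

section
/- If T is an invertible subintensity matrix such that exp(Tx) → 0 as x → ∞, and α is a probability vector, then the function f(x) = α exp(Tx) t with t = -T·e is a probability density on [0,∞), i.e., f ≥ 0 and ∫₀^∞ f(x) dx = 1. -/
open Matrix MeasureTheory Filter

/-- Entrywise nonnegativity of powers of an entrywise-nonnegative matrix. -/
lemma pt_pow_entry_nonneg {d : ℕ} {A : Matrix (Fin d) (Fin d) ℝ}
    (hA : ∀ i j, 0 ≤ A i j) : ∀ n, ∀ i j, 0 ≤ (A ^ n) i j := by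
  intro n
  induction n with
  | zero => intro i j; rw [pow_zero]; by_cases h : i = j <;> simp [Matrix.one_apply, h]
  | succ n ih =>
    intro i j
    rw [pow_succ, Matrix.mul_apply]
    exact Finset.sum_nonneg fun k _ => mul_nonneg (ih i k) (hA k j)

/-- Entrywise nonnegativity of the exponential of an entrywise-nonnegative matrix. -/
lemma pt_exp_entry_nonneg {d : ℕ} {A : Matrix (Fin d) (Fin d) ℝ}
    (hA : ∀ i j, 0 ≤ A i j) (i j : Fin d) : 0 ≤ NormedSpace.exp A i j := by
  letI : SeminormedRing (Matrix (Fin d) (Fin d) ℝ) := Matrix.linftyOpSemiNormedRing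
  letI : NormedRing (Matrix (Fin d) (Fin d) ℝ) := Matrix.linftyOpNormedRing
  letI : NormedAlgebra ℝ (Matrix (Fin d) (Fin d) ℝ) := Matrix.linftyOpNormedAlgebra
  have hs := NormedSpace.exp_series_hasSum_exp' (𝕂 := ℝ) A
  let φ : Matrix (Fin d) (Fin d) ℝ →+ ℝ :=
    AddMonoidHom.mk' (fun M => M i j) (fun M N => rfl)
  have hφ : Continuous φ := (continuous_apply j).comp (continuous_apply i)
  have h2 := hs.map φ hφ
  exact h2.nonneg fun n => by
    show 0 ≤ (((Nat.factorial n : ℝ))⁻¹ • A ^ n) i j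
    simpa [φ] using
      mul_nonneg (by positivity : (0:ℝ) ≤ ((Nat.factorial n : ℝ))⁻¹)
        (pt_pow_entry_nonneg hA n i j)

/-- Entrywise nonnegativity of `exp (x • T)` for a subintensity matrix `T` and `x ≥ 0`. -/
lemma pt_exp_smul_entry_nonneg {d : ℕ} {T : Matrix (Fin d) (Fin d) ℝ}
    (hoff : ∀ i j, i ≠ j → 0 ≤ T i j) (hrow : ∀ i, ∑ j, T i j ≤ 0)
    {x : ℝ} (hx : 0 ≤ x) (i j : Fin d) : 0 ≤ NormedSpace.exp (x • T) i j := by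
  classical
  letI : SeminormedRing (Matrix (Fin d) (Fin d) ℝ) := Matrix.linftyOpSemiNormedRing
  letI : NormedRing (Matrix (Fin d) (Fin d) ℝ) := Matrix.linftyOpNormedRing
  letI : NormedAlgebra ℝ (Matrix (Fin d) (Fin d) ℝ) := Matrix.linftyOpNormedAlgebra
  set c : ℝ := ∑ k, -(T k k) with hc
  have hdiag : ∀ i, T i i ≤ 0 := by
    intro i
    have h1 : T i i + ∑ j ∈ Finset.univ.erase i, T i j = ∑ j, T i j :=
      Finset.add_sum_erase _ _ (Finset.mem_univ i)
    have h2 : 0 ≤ ∑ j ∈ Finset.univ.erase i, T i j :=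
      Finset.sum_nonneg fun k hk => hoff i k (Finset.ne_of_mem_erase hk).symm
    linarith [hrow i]
  have hcle : ∀ i, -(T i i) ≤ c :=
    fun i => Finset.single_le_sum (fun k _ => neg_nonneg.2 (hdiag k)) (Finset.mem_univ i)
  have hTc : ∀ i j, 0 ≤ (T + c • (1 : Matrix (Fin d) (Fin d) ℝ)) i j := by
    intro i j
    by_cases h : i = j
    · subst h
      have := hcle i
      simp only [Matrix.add_apply, Matrix.smul_apply, Matrix.one_apply_eq, smul_eq_mul, mul_one]
      linarith
    · simpa [Matrix.add_apply, Matrix.smul_apply, Matrix.one_apply, h] using hoff i j h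
  have hsplit : x • T = (-(x * c)) • (1 : Matrix (Fin d) (Fin d) ℝ)
      + x • (T + c • (1 : Matrix (Fin d) (Fin d) ℝ)) := by
    rw [smul_add, smul_smul, neg_smul]
    abel
  have hcomm : Commute ((-(x * c)) • (1 : Matrix (Fin d) (Fin d) ℝ))
      (x • (T + c • (1 : Matrix (Fin d) (Fin d) ℝ))) :=
    ((Commute.one_left _).smul_left _).smul_right _
  rw [hsplit, Matrix.exp_add_of_commute _ _ hcomm]
  have halg : (-(x * c)) • (1 : Matrix (Fin d) (Fin d) ℝ)
      = algebraMap ℝ (Matrix (Fin d) (Fin d) ℝ) (-(x * c)) :=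
    (Algebra.algebraMap_eq_smul_one _).symm
  rw [halg]
  erw [← NormedSpace.algebraMap_exp_comm]
  rw [Algebra.algebraMap_eq_smul_one,
    smul_mul_assoc, one_mul, Matrix.smul_apply, smul_eq_mul]
  refine mul_nonneg ?_ ?_
  · rw [← Real.exp_eq_exp_ℝ]
    exact (Real.exp_pos _).le
  · exact pt_exp_entry_nonneg (fun i j => mul_nonneg hx (hTc i j)) i j

/-- If `T` is an invertible subintensity matrix with `exp(Tx) → 0` as
`x → ∞`, and `α` is a probability vector, then `f(x) = α exp(Tx) t` with `t = -T·e`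
is a probability density on `[0,∞)`: `f ≥ 0` on `[0,∞)` and `∫₀^∞ f(x) dx = 1`. -/
theorem phase_type_is_density
    {d : ℕ} (T : Matrix (Fin d) (Fin d) ℝ)
    (hoff : ∀ i j, i ≠ j → 0 ≤ T i j)
    (hrow : ∀ i, ∑ j, T i j ≤ 0)
    (hinv : IsUnit T.det)
    (hlim : Tendsto (fun x : ℝ => NormedSpace.exp (x • T)) atTop (nhds 0))
    (α : Fin d → ℝ) (hα_nonneg : ∀ i, 0 ≤ α i) (hα_sum : ∑ i, α i = 1)
    (t : Fin d → ℝ) (ht : t = -(T.mulVec fun _ => 1))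
    (f : ℝ → ℝ) (hf : ∀ x, f x = α ⬝ᵥ (NormedSpace.exp (x • T)).mulVec t) :
    (∀ x : ℝ, 0 ≤ x → 0 ≤ f x) ∧ ∫ x in Set.Ioi (0:ℝ), f x = 1 := by
  classical
  have ht_nonneg : ∀ i, 0 ≤ t i := by
    intro i
    rw [ht]
    simp only [Pi.neg_apply, Matrix.mulVec, dotProduct, mul_one, neg_nonneg]
    exact hrow i
  have hnonneg : ∀ x : ℝ, 0 ≤ x → 0 ≤ f x := by
    intro x hx
    rw [hf]
    simp only [dotProduct, Matrix.mulVec]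
    refine Finset.sum_nonneg fun i _ => mul_nonneg (hα_nonneg i) ?_
    exact Finset.sum_nonneg fun j _ =>
      mul_nonneg (pt_exp_smul_entry_nonneg hoff hrow hx i j) (ht_nonneg j)
  refine ⟨hnonneg, ?_⟩
  letI : SeminormedRing (Matrix (Fin d) (Fin d) ℝ) := Matrix.linftyOpSemiNormedRing
  letI : NormedRing (Matrix (Fin d) (Fin d) ℝ) := Matrix.linftyOpNormedRing
  letI : NormedAlgebra ℝ (Matrix (Fin d) (Fin d) ℝ) := Matrix.linftyOpNormedAlgebra
  let L : Matrix (Fin d) (Fin d) ℝ →ₗ[ℝ] ℝ :=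
    { toFun := fun M => -(α ⬝ᵥ M.mulVec fun _ => 1)
      map_add' := by intro M N; simp [Matrix.add_mulVec, dotProduct_add, add_comm]
      map_smul' := by intro c M; simp [Matrix.smul_mulVec, dotProduct_smul] }
  let Lc := L.toContinuousLinearMap
  set G : ℝ → ℝ := fun u => Lc (NormedSpace.exp (u • T)) with hG
  have hG_deriv : ∀ x : ℝ, HasDerivAt G (f x) x := by
    intro x
    have hd : HasDerivAt (fun u : ℝ => NormedSpace.exp (u • T))
        (NormedSpace.exp (x • T) * T) x := hasDerivAt_exp_smul_const T x
    have hL := (Lc.hasFDerivAt (x := NormedSpace.exp (x • T))).comp_hasDerivAt x hd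
    have hval : Lc (NormedSpace.exp (x • T) * T) = f x := by
      show -(α ⬝ᵥ (NormedSpace.exp (x • T) * T).mulVec fun _ => 1) = f x
      rw [hf, ht, ← Matrix.mulVec_mulVec, Matrix.mulVec_neg, dotProduct_neg]
    rw [← hval]
    exact hL
  have hGlim : Tendsto G atTop (nhds 0) := by
    have h0 : Lc (0 : Matrix (Fin d) (Fin d) ℝ) = 0 := map_zero Lc
    have := (Lc.continuous.tendsto 0).comp hlim
    rw [h0] at this
    exact this
  have hG0 : G 0 = -1 := by
    have h1 : ((0:ℝ) • T) = 0 := zero_smul _ _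
    show -(α ⬝ᵥ (NormedSpace.exp ((0:ℝ) • T)).mulVec fun _ => 1) = -1
    rw [h1, NormedSpace.exp_zero, Matrix.one_mulVec]
    simp [dotProduct, hα_sum]
  have hint := integral_Ioi_of_hasDerivAt_of_nonneg' (g := G) (g' := f) (a := 0)
    (fun x _ => hG_deriv x) (fun x hx => hnonneg x (le_of_lt hx)) hGlim
  rw [hint, hG0]
  ring
end

section
/- With θ and θ^← as above, for t < θ_∞ the jump of the time-changed process at time t equals the increment of X over the deleted interval: R_t - lim_{s↑t} R_s = X_{θ^←_t} - X_{sup{u : θ_u < t}}, where sup{u : θ_u < t} is the left endpoint of the maximal interval on which θ is constant at value t. -/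
open MeasureTheory Filter

/-- With `θ` and `θ^←` as in the time-change construction, the jump of
`R_t = X_{θ^←_t}` at a time `t < θ_∞` equals the increment of `X` over the deleted
interval: the left limit of `R` at `t` is `X_{g(t)}` where
`g(t) = sup{u ≥ 0 : θ_u < t}` is the left endpoint of the maximal interval on which `θ`
is constant at value `t`, and hence `R_t - lim_{s↑t} R_s = X_{θ^←_t} - X_{g(t)}`. -/
theorem time_changed_process_jump
    {S : Type*} [Fintype S] [DecidableEq S] (Sp : Set S) [DecidablePred (· ∈ Sp)]
    (J : ℝ → S)
    (hJright : ∀ t : ℝ, ∃ ε > 0, ∀ s ∈ Set.Ico t (t + ε), J s = J t)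
    (hJfin : ∀ b : ℝ, 0 < b →
      Set.Finite {t ∈ Set.Icc (0:ℝ) b |
        ¬ ∃ ε > 0, ∀ s ∈ Set.Ioo (t - ε) (t + ε), J s = J t})
    (hmeas : Measurable fun s : ℝ => if J s ∈ Sp then (1:ℝ) else 0)
    (θ : ℝ → ℝ) (hθ : ∀ t, θ t = ∫ s in (0:ℝ)..t, (if J s ∈ Sp then (1:ℝ) else 0))
    (θinv : ℝ → ℝ) (hθinv : ∀ t, θinv t = sInf {s : ℝ | 0 ≤ s ∧ t ≤ θ s})
    (X : ℝ → ℝ) (hX : Continuous X)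
    (R : ℝ → ℝ) (hR : ∀ t, R t = X (θinv t))
    (g : ℝ → ℝ) (hg : ∀ t, g t = sSup {u : ℝ | 0 ≤ u ∧ θ u < t}) :
    ∀ t : ℝ, 0 < t → (∃ s, t < θ s) →
      Tendsto R (nhdsWithin t (Set.Iio t)) (nhds (X (g t))) ∧
      R t - X (g t) = X (θinv t) - X (g t) := by
  intro t ht hex
  obtain ⟨w, hw⟩ := hex
  set f : ℝ → ℝ := fun s => if J s ∈ Sp then (1:ℝ) else 0 with hf
  have hf01 : ∀ s, 0 ≤ f s ∧ f s ≤ 1 := by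
    intro s; simp only [hf]; split <;> norm_num
  have hint : ∀ a b : ℝ, IntervalIntegrable f volume a b := by
    intro a b
    refine IntervalIntegrable.mono_fun' (g := fun _ => (1:ℝ))
      intervalIntegrable_const hmeas.aestronglyMeasurable.restrict ?_
    filter_upwards with s
    rw [Real.norm_eq_abs, abs_of_nonneg (hf01 s).1]
    exact (hf01 s).2
  have hθ0 : θ 0 = 0 := by rw [hθ 0, intervalIntegral.integral_same]
  have hmono : Monotone θ := by
    intro a b hab
    rw [hθ a, hθ b, ← sub_nonneg,
      intervalIntegral.integral_interval_sub_left (hint 0 b) (hint 0 a)]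
    exact intervalIntegral.integral_nonneg hab fun u _ => (hf01 u).1
  have hθcont : Continuous θ := by
    have := intervalIntegral.continuous_primitive (μ := volume) hint 0
    convert this using 1
    funext b; exact hθ b
  -- w is positive
  have hw0 : 0 < w := by
    by_contra h
    push_neg at h
    have : θ w ≤ 0 := hθ0 ▸ hmono h
    linarith
  -- g t facts
  have hGne : {u : ℝ | 0 ≤ u ∧ θ u < t}.Nonempty := ⟨0, le_refl 0, by rw [hθ0]; exact ht⟩
  have hGbdd : BddAbove {u : ℝ | 0 ≤ u ∧ θ u < t} := by
    refine ⟨w, fun u hu => ?_⟩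
    by_contra h
    push_neg at h
    exact absurd (hmono h.le) (by linarith [hu.2])
  -- for 0 < s < t, θinv s ≤ g t
  have hup : ∀ s : ℝ, 0 < s → s < t → θinv s ≤ g t := by
    intro s hs hst
    have hsw : s ≤ θ w := by linarith
    obtain ⟨v, hv, hθv⟩ := intermediate_value_Icc hw0.le (hθcont.continuousOn)
      (Set.mem_Icc.mpr ⟨by rw [hθ0]; exact hs.le, hsw⟩)
    rw [hθinv s]
    calc sInf {u : ℝ | 0 ≤ u ∧ s ≤ θ u} ≤ v :=
          csInf_le ⟨0, fun x hx => hx.1⟩ ⟨hv.1, hθv.ge⟩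
      _ ≤ g t := by
          rw [hg t]; exact le_csSup hGbdd ⟨hv.1, by rw [hθv]; exact hst⟩
  -- for θ u < s with u in the set, u ≤ θinv s
  have hlow : ∀ u s : ℝ, θ u < s → s ≤ t → u ≤ θinv s := by
    intro u s hus hst
    rw [hθinv s]
    refine le_csInf ⟨w, hw0.le, by linarith⟩ ?_
    intro v hv
    by_contra h
    push_neg at h
    exact absurd (hmono h.le) (by linarith [hv.2])
  have hkey : Tendsto θinv (nhdsWithin t (Set.Iio t)) (nhds (g t)) := by
    rw [tendsto_order]
    constructor
    · intro a ha
      have : a < sSup {u : ℝ | 0 ≤ u ∧ θ u < t} := by rw [hg t] at ha; exact ha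
      obtain ⟨u, hu, hau⟩ := exists_lt_of_lt_csSup hGne this
      have hmem : Set.Ioo (θ u) t ∈ nhdsWithin t (Set.Iio t) := by
        apply Ioo_mem_nhdsLT_of_mem
        exact ⟨hu.2, le_refl t⟩
      filter_upwards [hmem] with s hs
      exact lt_of_lt_of_le hau (hlow u s hs.1 hs.2.le)
    · intro a ha
      have hmem : Set.Ioo (0:ℝ) t ∈ nhdsWithin t (Set.Iio t) :=
        Ioo_mem_nhdsLT_of_mem ⟨ht, le_refl t⟩
      filter_upwards [hmem] with s hs
      exact lt_of_le_of_lt (hup s hs.1 hs.2) ha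
  constructor
  · have : Tendsto (fun s => X (θinv s)) (nhdsWithin t (Set.Iio t)) (nhds (X (g t))) :=
      (hX.tendsto (g t)).comp hkey
    refine this.congr fun s => (hR s).symm
  · rw [hR t]
end
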